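/- A binary cubic form f over ℤ_p represents a unit of ℤ_p if and only if f is primitive and, in the case p = 2, f(x,y) is not congruent to xy(x+y) modulo 2. -/

import Mathlib

/-!
A value of `f` at `(x, y) ∈ ℤ_p²` is a unit exactly when its reduction mod `p` is nonzero, and
reduction `ℤ_p → 𝔽_p` is surjective, so `f` represents a unit iff its reduction `f̄` is not
identically zero on `𝔽_p²`. For odd `p`, a cubic form vanishing at `(1, 0)`, `(0, 1)` and `(1, ±1)`
has zero coefficients, as `2` is invertible; over `𝔽_2` the only nonzero form vanishing everywhere
is `xy(x + y)`.
-/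

def cubicForm {R : Type*} [CommSemiring R] (a b c d x y : R) : R :=
  a * x ^ 3 + b * x ^ 2 * y + c * x * y ^ 2 + d * y ^ 3

theorem RingHom.map_cubicForm {R S : Type*} [CommSemiring R] [CommSemiring S] (f : R →+* S)
    (a b c d x y : R) :
    f (cubicForm a b c d x y) = cubicForm (f a) (f b) (f c) (f d) (f x) (f y) := by
  simp only [cubicForm, map_add, map_mul, map_pow]

theorem eq_zero_of_forall_cubicForm_eq_zero {R : Type*} [CommRing R] [NoZeroDivisors R]
    (h2 : (2 : R) ≠ 0) {a b c d : R} (h : ∀ x y, cubicForm a b c d x y = 0) :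
    a = 0 ∧ b = 0 ∧ c = 0 ∧ d = 0 := by
  have ha : a = 0 := by simpa [cubicForm] using h 1 0
  have hd : d = 0 := by simpa [cubicForm] using h 0 1
  have hsum : b + c = 0 := by simpa [cubicForm, ha, hd] using h 1 1
  have hdiff : c - b = 0 := by
    have := h 1 (-1)
    simp only [cubicForm, ha, hd] at this
    linear_combination this
  have h2c : (2 : R) * c = 0 := by linear_combination hsum + hdiff
  have hc : c = 0 := (mul_eq_zero.mp h2c).resolve_left h2
  exact ⟨ha, by linear_combination hsum - hc, hc, hd⟩

theorem ZMod.forall_cubicForm_eq_zero_iff_of_two (a b c d : ZMod 2) :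
    (∀ x y, cubicForm a b c d x y = 0) ↔
      (a = 0 ∧ b = 0 ∧ c = 0 ∧ d = 0) ∨ (a = 0 ∧ b = 1 ∧ c = 1 ∧ d = 0) := by
  revert a b c d
  decide

theorem ZMod.exists_cubicForm_ne_zero_iff (p : ℕ) [Fact p.Prime] (a b c d : ZMod p) :
    (∃ x y, cubicForm a b c d x y ≠ 0) ↔
      ¬ (a = 0 ∧ b = 0 ∧ c = 0 ∧ d = 0) ∧ (p = 2 → ¬ (a = 0 ∧ b = 1 ∧ c = 1 ∧ d = 0)) := by
  rcases eq_or_ne p 2 with rfl | hp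
  · simp only [ne_eq, ← not_forall, forall_cubicForm_eq_zero_iff_of_two, forall_const]
    tauto
  · have h2 : (2 : ZMod p) ≠ 0 := Ring.two_ne_zero (by rwa [ZMod.ringChar_zmod_n])
    simp only [hp, IsEmpty.forall_iff, and_true]
    constructor
    · rintro ⟨x, y, hxy⟩ ⟨rfl, rfl, rfl, rfl⟩
      simp [cubicForm] at hxy
    · intro h
      by_contra! hzero
      exact h (eq_zero_of_forall_cubicForm_eq_zero h2 hzero)

namespace PadicInt

variable {p : ℕ} [Fact p.Prime]

theorem toZMod_eq_zero_iff_dvd (z : ℤ_[p]) : toZMod z = 0 ↔ (p : ℤ_[p]) ∣ z := by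
  rw [← RingHom.mem_ker, ker_toZMod, maximalIdeal_eq_span_p, Ideal.mem_span_singleton]

theorem isUnit_iff_toZMod_ne_zero (z : ℤ_[p]) : IsUnit z ↔ toZMod z ≠ 0 := by
  rw [← IsLocalRing.notMem_maximalIdeal, ← ker_toZMod, RingHom.mem_ker]

theorem exists_isUnit_cubicForm_iff (a b c d : ℤ_[p]) :
    (∃ x y, IsUnit (cubicForm a b c d x y)) ↔
      ∃ x y : ZMod p, cubicForm (toZMod a) (toZMod b) (toZMod c) (toZMod d) x y ≠ 0 := by
  simp only [isUnit_iff_toZMod_ne_zero, RingHom.map_cubicForm]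
  rw [(ZMod.ringHom_surjective toZMod).exists₂]

end PadicInt

/-- A binary cubic form `f = ax³ + bx²y + cxy² + dy³` over `ℤ_p` represents a unit of
`ℤ_p` if and only if `f` is primitive (not all coefficients in `pℤ_p`) and, in case
`p = 2`, `f(x,y)` is not congruent to `xy(x+y) = x²y + xy²` modulo `2`. -/
theorem stmt_2 (p : ℕ) [Fact p.Prime] (a b c d : ℤ_[p]) :
    (∃ x y : ℤ_[p], IsUnit (a * x ^ 3 + b * x ^ 2 * y + c * x * y ^ 2 + d * y ^ 3)) ↔
      (¬ ((p : ℤ_[p]) ∣ a ∧ (p : ℤ_[p]) ∣ b ∧ (p : ℤ_[p]) ∣ c ∧ (p : ℤ_[p]) ∣ d) ∧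
        (p = 2 → ¬ ((2 : ℤ_[p]) ∣ a ∧ (2 : ℤ_[p]) ∣ (b - 1) ∧
          (2 : ℤ_[p]) ∣ (c - 1) ∧ (2 : ℤ_[p]) ∣ d))) := by
  change (∃ x y, IsUnit (cubicForm a b c d x y)) ↔ _
  rw [PadicInt.exists_isUnit_cubicForm_iff, ZMod.exists_cubicForm_ne_zero_iff]
  simp only [PadicInt.toZMod_eq_zero_iff_dvd]
  refine and_congr_right' (imp_congr_right fun hp => ?_)
  have h2 : (2 : ℤ_[p]) = p := by simp [hp]
  simp only [h2, ← PadicInt.toZMod_eq_zero_iff_dvd, map_sub, map_one, sub_eq_zero]
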